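/- arXiv:1509.00057 — 3 statements merged into one kernel-verified Lean document; each statement's English description precedes it below -/
import Mathlib

section
/- Let Δ ⊂ ℤ² be finite and let U(Δ) = -2 Σ_{x∈Δ} Σ_{y∈ℤ²∖Δ} |x-y|^{-p} with p > 4. Then U(Δ) is finite and U(Δ) ≥ -2 |∂Δ| Σ_{n∈ℤ², n≠0} |n₁|/|n|^p, where |∂Δ| is the number of nearest-neighbor bonds separating Δ from its complement. -/
/-!
Grouping the pairs `(x, y)` by their displacement `n = y - x`, the sum becomes
`Σₙ |n|^{-p} N(n)`, where `N(n)` counts the points of `Δ` that leave `Δ` when translated by `n`.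
Translation escape counts are subadditive and even in `n`, so `N(n) ≤ |n₁| N(e₁) + |n₂| N(e₂)`,
and every escape by `e₁` or `e₂` is a boundary bond. Since `|n|` is invariant under swapping the
coordinates, `Σ |n₂| |n|^{-p} = Σ |n₁| |n|^{-p}`, which gives the bound.
-/

open Finset

/-- Euclidean norm of a point of `ℤ²`. -/
noncomputable def zNorm (x : ℤ × ℤ) : ℝ := Real.sqrt ((x.1 : ℝ) ^ 2 + (x.2 : ℝ) ^ 2)

section EscapeCount

variable {G : Type*} [AddCommGroup G] [DecidableEq G] (Δ : Finset G)

def escapeCount (v : G) : ℕ := #{x ∈ Δ | x + v ∉ Δ}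

@[simp] lemma escapeCount_zero : escapeCount Δ 0 = 0 := by simp [escapeCount]

lemma escapeCount_add_le (u v : G) :
    escapeCount Δ (u + v) ≤ escapeCount Δ u + escapeCount Δ v := by
  have hsub : {x ∈ Δ | x + (u + v) ∉ Δ} ⊆
      {x ∈ Δ | x + u ∉ Δ} ∪ {z ∈ Δ | z + v ∉ Δ}.image (· - u) := by
    intro x hx
    simp only [mem_filter, mem_union, mem_image] at hx ⊢
    by_cases hxu : x + u ∈ Δ
    · exact .inr ⟨x + u, ⟨hxu, by rw [add_assoc]; exact hx.2⟩, add_sub_cancel_right x u⟩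
    · exact .inl ⟨hx.1, hxu⟩
  calc escapeCount Δ (u + v) ≤ _ := card_le_card hsub
    _ ≤ _ := card_union_le _ _
    _ ≤ escapeCount Δ u + escapeCount Δ v := add_le_add_right card_image_le _

lemma escapeCount_neg (v : G) : escapeCount Δ (-v) = escapeCount Δ v := by
  have hstay : #{x ∈ Δ | x + -v ∈ Δ} = #{x ∈ Δ | x + v ∈ Δ} := by
    refine card_nbij' (· + -v) (· + v) ?_ ?_ ?_ ?_ <;> intro x hx <;>
      simp_all [add_assoc]
  have h₁ := card_filter_add_card_filter_not (s := Δ) (fun x => x + -v ∈ Δ)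
  have h₂ := card_filter_add_card_filter_not (s := Δ) (fun x => x + v ∈ Δ)
  unfold escapeCount
  omega

lemma escapeCount_nsmul_le (v : G) (k : ℕ) : escapeCount Δ (k • v) ≤ k * escapeCount Δ v := by
  induction k with
  | zero => simp
  | succ k ih =>
    calc escapeCount Δ ((k + 1) • v) ≤ escapeCount Δ (k • v) + escapeCount Δ v := by
          rw [succ_nsmul]; exact escapeCount_add_le Δ _ _
      _ ≤ (k + 1) * escapeCount Δ v := by rw [add_one_mul]; omega

lemma escapeCount_zsmul_le (v : G) (k : ℤ) :
    escapeCount Δ (k • v) ≤ k.natAbs * escapeCount Δ v := by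
  rcases Int.natAbs_eq k with hk | hk <;> rw [hk]
  · simpa only [natCast_zsmul, Int.natAbs_natCast] using escapeCount_nsmul_le Δ v k.natAbs
  · simpa only [neg_zsmul, natCast_zsmul, escapeCount_neg, Int.natAbs_neg, Int.natAbs_natCast]
      using escapeCount_nsmul_le Δ v k.natAbs

lemma sum_tsum_compl_eq_tsum_mul_escapeCount {g : G → ℝ} (hg : Summable g) :
    ∑ x ∈ Δ, ∑' y : {y : G // y ∉ Δ}, g (x - y) = ∑' n, g n * escapeCount Δ (-n) := by
  have hreindex (x : G) :
      ∑' y : {y : G // y ∉ Δ}, g (x - y) = ∑' n, {n | x + -n ∉ Δ}.indicator g n := by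
    rw [show ∑' y : {y : G // y ∉ Δ}, g (x - y) = _ from tsum_subtype {y | y ∉ Δ} (g <| x - ·),
      ← (Equiv.subLeft x).tsum_eq]
    congr 1; ext n
    simp [Set.indicator_apply, sub_eq_add_neg]
  simp_rw [hreindex]
  rw [← (Summable.tsum_finsetSum fun x _ => hg.indicator _)]
  congr 1; ext n
  simp [Set.indicator_apply, escapeCount, Finset.sum_ite, mul_comm]

end EscapeCount

lemma escapeCount_le_natAbs_mul (Δ : Finset (ℤ × ℤ)) (n : ℤ × ℤ) :
    escapeCount Δ n ≤ n.1.natAbs * escapeCount Δ (1, 0) + n.2.natAbs * escapeCount Δ (0, 1) := by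
  have hn : n = n.1 • ((1, 0) : ℤ × ℤ) + n.2 • (0, 1) := by ext <;> simp
  calc escapeCount Δ n
      ≤ escapeCount Δ (n.1 • ((1, 0) : ℤ × ℤ)) + escapeCount Δ (n.2 • (0, 1)) := by
        conv_lhs => rw [hn]
        exact escapeCount_add_le Δ _ _
    _ ≤ _ := add_le_add (escapeCount_zsmul_le Δ _ _) (escapeCount_zsmul_le Δ _ _)

lemma zNorm_nonneg (x : ℤ × ℤ) : 0 ≤ zNorm x := Real.sqrt_nonneg _

lemma zNorm_swap (x : ℤ × ℤ) : zNorm x.swap = zNorm x := by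
  simp [zNorm, add_comm]

lemma abs_fst_le_zNorm (x : ℤ × ℤ) : |(x.1 : ℝ)| ≤ zNorm x := by
  rw [← Real.sqrt_sq_eq_abs]
  exact Real.sqrt_le_sqrt (by nlinarith [sq_nonneg (x.2:ℝ)])

lemma abs_snd_le_zNorm (x : ℤ × ℤ) : |(x.2 : ℝ)| ≤ zNorm x := by
  simpa [zNorm_swap] using abs_fst_le_zNorm x.swap

lemma summable_zNorm_rpow_neg {q : ℝ} (hq : 2 < q) :
    Summable fun n : ℤ × ℤ => zNorm n ^ (-q) := by
  have hsup : Summable fun x : Fin 2 → ℤ => zNorm (x 0, x 1) ^ (-q) := by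
    refine (EisensteinSeries.summable_one_div_norm_rpow hq).of_nonneg_of_le
      (fun x => Real.rpow_nonneg (zNorm_nonneg _) _) (fun x => ?_)
    rcases eq_or_ne x 0 with rfl | hx
    · simp [zNorm, Real.zero_rpow (by linarith : -q ≠ 0)]
    · refine Real.rpow_le_rpow_of_nonpos (norm_pos_iff.2 hx) ?_ (by linarith)
      rw [EisensteinSeries.norm_eq_max_natAbs, Nat.cast_max]
      simp only [Nat.cast_natAbs, Int.cast_abs]
      exact max_le (abs_fst_le_zNorm (x 0, x 1)) (abs_snd_le_zNorm (x 0, x 1))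
  exact (finTwoArrowEquiv ℤ).summable_iff.1 hsup

lemma summable_abs_fst_mul_zNorm_rpow_neg {p : ℝ} (hp : 3 < p) :
    Summable fun n : ℤ × ℤ => |(n.1 : ℝ)| * zNorm n ^ (-p) := by
  refine (summable_zNorm_rpow_neg (q := p - 1) (by linarith)).of_nonneg_of_le
    (fun n => mul_nonneg (abs_nonneg _) (Real.rpow_nonneg (zNorm_nonneg _) _)) (fun n => ?_)
  calc |(n.1 : ℝ)| * zNorm n ^ (-p) ≤ zNorm n ^ (1 : ℝ) * zNorm n ^ (-p) := by
        rw [Real.rpow_one]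
        exact mul_le_mul_of_nonneg_right (abs_fst_le_zNorm n) (Real.rpow_nonneg (zNorm_nonneg _) _)
    _ = zNorm n ^ (-(p - 1)) := by
        rw [← Real.rpow_add' (zNorm_nonneg _) (by linarith)]; ring_nf

lemma tsum_zNorm_rpow_neg_mul_escapeCount_le {p : ℝ} (hp : 3 < p) (Δ : Finset (ℤ × ℤ)) :
    ∑' n, zNorm n ^ (-p) * escapeCount Δ n ≤
      (escapeCount Δ (1, 0) + escapeCount Δ (0, 1)) *
        ∑' n : ℤ × ℤ, |(n.1 : ℝ)| * zNorm n ^ (-p) := by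
  set a : ℝ := (escapeCount Δ (1, 0) : ℝ)
  set b : ℝ := (escapeCount Δ (0, 1) : ℝ)
  have h₁ := summable_abs_fst_mul_zNorm_rpow_neg hp
  have h₂ : Summable fun n : ℤ × ℤ => |(n.2 : ℝ)| * zNorm n ^ (-p) := by
    simpa [Function.comp_def, zNorm_swap] using (Equiv.prodComm ℤ ℤ).summable_iff.2 h₁
  have hswap : ∑' n : ℤ × ℤ, |(n.2 : ℝ)| * zNorm n ^ (-p) =
      ∑' n : ℤ × ℤ, |(n.1 : ℝ)| * zNorm n ^ (-p) := by
    rw [← (Equiv.prodComm ℤ ℤ).tsum_eq]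
    simp [zNorm_swap]
  have hpt (n : ℤ × ℤ) : zNorm n ^ (-p) * escapeCount Δ n ≤
      a * (|(n.1 : ℝ)| * zNorm n ^ (-p)) + b * (|(n.2 : ℝ)| * zNorm n ^ (-p)) := by
    have hcount : (escapeCount Δ n : ℝ) ≤ |(n.1 : ℝ)| * a + |(n.2 : ℝ)| * b := by
      simp only [a, b, ← Int.cast_abs, ← Nat.cast_natAbs]
      exact_mod_cast escapeCount_le_natAbs_mul Δ n
    calc zNorm n ^ (-p) * escapeCount Δ n
        ≤ zNorm n ^ (-p) * (|(n.1 : ℝ)| * a + |(n.2 : ℝ)| * b) :=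
          mul_le_mul_of_nonneg_left hcount (Real.rpow_nonneg (zNorm_nonneg n) _)
      _ = _ := by ring
  have hsum : Summable fun n =>
      a * (|(n.1 : ℝ)| * zNorm n ^ (-p)) + b * (|(n.2 : ℝ)| * zNorm n ^ (-p)) :=
    (h₁.mul_left a).add (h₂.mul_left b)
  have hnonneg (n : ℤ × ℤ) : 0 ≤ zNorm n ^ (-p) * escapeCount Δ n :=
    mul_nonneg (Real.rpow_nonneg (zNorm_nonneg n) _) (Nat.cast_nonneg _)
  calc ∑' n, zNorm n ^ (-p) * escapeCount Δ n
      ≤ ∑' n, (a * (|(n.1 : ℝ)| * zNorm n ^ (-p)) + b * (|(n.2 : ℝ)| * zNorm n ^ (-p))) :=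
        Summable.tsum_le_tsum hpt (hsum.of_nonneg_of_le hnonneg hpt) hsum
    _ = (a + b) * ∑' n : ℤ × ℤ, |(n.1 : ℝ)| * zNorm n ^ (-p) := by
        rw [(h₁.mul_left a).tsum_add (h₂.mul_left b), tsum_mul_left, tsum_mul_left, hswap, add_mul]

lemma finite_setOf_zNorm_eq_one : {v : ℤ × ℤ | zNorm v = 1}.Finite := by
  refine ((Set.finite_Icc (-1 : ℤ) 1).prod (Set.finite_Icc (-1 : ℤ) 1)).subset fun v hv => ?_
  have h₁ := abs_fst_le_zNorm v
  have h₂ := abs_snd_le_zNorm v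
  rw [show zNorm v = 1 from hv, ← Int.cast_abs, ← Int.cast_one, Int.cast_le] at h₁ h₂
  exact ⟨abs_le.1 h₁, abs_le.1 h₂⟩

def edgeBoundary (Δ : Finset (ℤ × ℤ)) : Set ((ℤ × ℤ) × (ℤ × ℤ)) :=
  {q | q.1 ∈ Δ ∧ q.2 ∉ Δ ∧ zNorm (q.1 - q.2) = 1}

lemma edgeBoundary_finite (Δ : Finset (ℤ × ℤ)) : (edgeBoundary Δ).Finite := by
  have hinj : Function.Injective fun q : (ℤ × ℤ) × (ℤ × ℤ) => (q.1, q.1 - q.2) := by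
    intro q q' h
    simp only [Prod.mk.injEq] at h
    exact Prod.ext h.1 (by simpa [h.1] using h.2)
  refine ((Δ.finite_toSet.prod finite_setOf_zNorm_eq_one).preimage hinj.injOn).subset ?_
  intro q hq
  exact ⟨hq.1, hq.2.2⟩

-- Only the bonds towards `+e₁` and `+e₂` are counted: they make up half of the boundary.
lemma escapeCount_add_escapeCount_le_ncard_edgeBoundary (Δ : Finset (ℤ × ℤ)) :
    escapeCount Δ (1, 0) + escapeCount Δ (0, 1) ≤ (edgeBoundary Δ).ncard := by
  set bonds : (ℤ × ℤ) → Finset ((ℤ × ℤ) × (ℤ × ℤ)) :=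
    fun e => {x ∈ Δ | x + e ∉ Δ}.image (fun x => (x, x + e))
  have hcard (e) : #(bonds e) = escapeCount Δ e :=
    card_image_of_injective _ fun x y h => congrArg Prod.fst h
  have hdisj : Disjoint (bonds (1, 0)) (bonds (0, 1)) := by
    simp only [bonds, disjoint_left, mem_image, mem_filter]
    rintro _ ⟨x, -, rfl⟩ ⟨y, -, h⟩
    simp only [Prod.ext_iff, Prod.fst_add, Prod.snd_add] at h
    omega
  have hsub : (↑(bonds (1, 0) ∪ bonds (0, 1)) : Set _) ⊆ edgeBoundary Δ := by
    intro q hq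
    simp only [bonds, coe_union, coe_image, coe_filter, Set.mem_union, Set.mem_image,
      Set.mem_ofPred_eq] at hq
    rcases hq with ⟨x, ⟨hx, hx'⟩, rfl⟩ | ⟨x, ⟨hx, hx'⟩, rfl⟩ <;>
      exact ⟨hx, hx', by simp [zNorm]⟩
  rw [← hcard, ← hcard, ← card_union_of_disjoint hdisj, ← Set.ncard_coe_finset]
  exact Set.ncard_le_ncard hsub (edgeBoundary_finite Δ)

lemma tsum_abs_fst_div_zNorm_rpow (p : ℝ) :
    ∑' n : {n : ℤ × ℤ // n ≠ 0}, |((n : ℤ × ℤ).1 : ℝ)| / zNorm (n : ℤ × ℤ) ^ p =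
      ∑' n : ℤ × ℤ, |(n.1 : ℝ)| * zNorm n ^ (-p) := by
  calc _ = ∑' n : ℤ × ℤ, |(n.1 : ℝ)| / zNorm n ^ p :=
        tsum_subtype_eq_of_support_subset (s := {n | n ≠ 0}) fun n hn h0 => hn (by simp [h0])
    _ = _ := by simp_rw [Real.rpow_neg (zNorm_nonneg _), div_eq_mul_inv]

/-- For a finite `Δ ⊂ ℤ²` and `p > 4`, the self-energy
`U(Δ) = -2 Σ_{x∈Δ} Σ_{y∉Δ} |x-y|^{-p}` is finite (all inner sums are summable) and
`U(Δ) ≥ -2 |∂Δ| Σ_{n≠0} |n₁|/|n|^p`, where `|∂Δ|` is the number of nearest-neighbor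
bonds separating `Δ` from its complement. -/
theorem selfEnergy_lower_bound (p : ℝ) (hp : 4 < p) (Δ : Finset (ℤ × ℤ)) :
    (∀ x ∈ Δ, Summable (fun y : {y : ℤ × ℤ // y ∉ Δ} => zNorm (x - (y : ℤ × ℤ)) ^ (-p))) ∧
    -2 * ∑ x ∈ Δ, ∑' y : {y : ℤ × ℤ // y ∉ Δ}, zNorm (x - (y : ℤ × ℤ)) ^ (-p)
      ≥ -2 * (({q : (ℤ × ℤ) × (ℤ × ℤ) | q.1 ∈ Δ ∧ q.2 ∉ Δ ∧ zNorm (q.1 - q.2) = 1}.ncard : ℝ))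
          * ∑' n : {n : ℤ × ℤ // n ≠ 0}, |((n : ℤ × ℤ).1 : ℝ)| / zNorm (n : ℤ × ℤ) ^ p := by
  have hsum := summable_zNorm_rpow_neg (by linarith : 2 < p)
  refine ⟨fun x _ => hsum.comp_injective fun y y' h => Subtype.ext (sub_right_injective h), ?_⟩
  rw [sum_tsum_compl_eq_tsum_mul_escapeCount Δ hsum, tsum_abs_fst_div_zNorm_rpow]
  simp_rw [escapeCount_neg]
  have hC : 0 ≤ ∑' n : ℤ × ℤ, |(n.1 : ℝ)| * zNorm n ^ (-p) :=
    tsum_nonneg fun n => mul_nonneg (abs_nonneg _) (Real.rpow_nonneg (zNorm_nonneg n) _)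
  have hbound := tsum_zNorm_rpow_neg_mul_escapeCount_le (by linarith : 3 < p) Δ
  have hboundary : (escapeCount Δ (1, 0) + escapeCount Δ (0, 1) : ℝ) ≤ (edgeBoundary Δ).ncard :=
    mod_cast escapeCount_add_escapeCount_le_ncard_edgeBoundary Δ
  change _ ≥ -2 * ((edgeBoundary Δ).ncard : ℝ) * _
  linarith [mul_le_mul_of_nonneg_right hboundary hC]
end

section
/- Suppose e_s : (0,∞) → ℝ satisfies e_s(w) - e_s(h*) ≥ C₃/w^{p-2} + τ/w for all w ≥ 1, where C₃ > 0, τ < 0, and p > 4. Then for all w ≥ 1, C₃/w^{p-4} ≤ |τ|·w + (C₃·|τ|^{-1})^{1/(p-3)} · w · (e_s(w) - e_s(h*)). -/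
/-- if `e_s(w) - e_s(h*) ≥ C₃/w^{p-2} + τ/w` for all integers `w ≥ 1`,
where `C₃ > 0`, `τ < 0`, `p > 4`, and `h*` is a minimizer of `e_s` over the positive
integers (so `e_s(w) - e_s(h*) ≥ 0`), then for all integers `w ≥ 1`,
`C₃/w^{p-4} ≤ |τ|·w + (C₃·|τ|⁻¹)^{1/(p-3)}·w·(e_s(w) - e_s(h*))`. -/
theorem spacing_energy_bound (p τ C₃ : ℝ) (hp : 4 < p) (hτ : τ < 0) (hC : 0 < C₃)
    (es : ℝ → ℝ) (hstar : ℝ)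
    (hmin : ∀ w : ℕ, 1 ≤ w → 0 ≤ es (w : ℝ) - es hstar)
    (hlow : ∀ w : ℕ, 1 ≤ w → C₃ / (w : ℝ) ^ (p - 2) + τ / (w : ℝ) ≤ es (w : ℝ) - es hstar) :
    ∀ w : ℕ, 1 ≤ w →
      C₃ / (w : ℝ) ^ (p - 4)
        ≤ |τ| * (w : ℝ) + (C₃ * |τ|⁻¹) ^ (1 / (p - 3)) * (w : ℝ) * (es (w : ℝ) - es hstar) := by
  intro w hw
  have hW : (1 : ℝ) ≤ (w : ℝ) := by exact_mod_cast hw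
  have hWpos : (0 : ℝ) < (w : ℝ) := lt_of_lt_of_le one_pos hW
  set W := (w : ℝ) with hWdef
  have habs : |τ| = -τ := abs_of_neg hτ
  have hτ' : (0 : ℝ) < -τ := by linarith
  rw [habs]
  have hWp3 : (0 : ℝ) < W ^ (p - 3) := Real.rpow_pos_of_pos hWpos _
  have hWp4 : (0 : ℝ) < W ^ (p - 4) := Real.rpow_pos_of_pos hWpos _
  have h34 : W ^ (p - 3) = W ^ (p - 4) * W := by
    have h : p - 3 = p - 4 + 1 := by ring
    rw [h, Real.rpow_add_one hWpos.ne']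
  have h23 : W ^ (p - 2) = W ^ (p - 3) * W := by
    have h : p - 2 = p - 3 + 1 := by ring
    rw [h, Real.rpow_add_one hWpos.ne']
  set x := C₃ / W ^ (p - 3) with hxdef
  have hxpos : 0 < x := div_pos hC hWp3
  have hrw4 : C₃ / W ^ (p - 4) = x * W := by
    rw [hxdef, h34]
    field_simp
  have hrw2 : C₃ / W ^ (p - 2) = x / W := by
    rw [hxdef, h23, div_div]
  have hD := hmin w hw
  have hL := hlow w hw
  simp only [← hWdef] at hD hL
  rw [hrw2] at hL
  have hA : (0 : ℝ) ≤ (C₃ * (-τ)⁻¹) ^ (1 / (p - 3)) :=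
    Real.rpow_nonneg (by positivity) _
  rw [hrw4]
  by_cases hcase : x ≤ -τ
  · have h1 : x * W ≤ -τ * W := mul_le_mul_of_nonneg_right hcase hWpos.le
    nlinarith [mul_nonneg (mul_nonneg hA hWpos.le) hD]
  · push_neg at hcase
    have hp3 : (0 : ℝ) < p - 3 := by linarith
    have hWle : W ^ (p - 3) ≤ C₃ * (-τ)⁻¹ := by
      have h2 : W ^ (p - 3) * (-τ) ≤ C₃ := by
        rw [hxdef, lt_div_iff₀ hWp3] at hcase
        nlinarith
      rw [← div_eq_mul_inv]
      exact (le_div_iff₀ hτ').mpr h2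
    have hWA : W ≤ (C₃ * (-τ)⁻¹) ^ (1 / (p - 3)) := by
      have h1 : W = (W ^ (p - 3)) ^ (1 / (p - 3)) := by
        rw [← Real.rpow_mul hWpos.le, mul_one_div, div_self hp3.ne', Real.rpow_one]
      rw [h1]
      exact Real.rpow_le_rpow hWp3.le hWle (by positivity)
    have hWD : x + τ ≤ W * (es W - es hstar) := by
      have h3 := mul_le_mul_of_nonneg_left hL hWpos.le
      rw [mul_add, mul_div_cancel₀ _ hWpos.ne', mul_div_cancel₀ _ hWpos.ne'] at h3
      linarith
    have hxτ : 0 < x + τ := by linarith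
    nlinarith [mul_le_mul_of_nonneg_right hWA hxτ.le,
      mul_le_mul_of_nonneg_left hWD hA]
end

section
/- Let w ≥ 1, h ≥ 1 be integers, p > 6, and define f(w₁,h,w₂) = (1/2) W(L⁺_h, Q_{w₁,h,w₂}) where L⁺_h = {(x,y) ∈ ℤ² : -h ≤ x < 0, y > 0}, Q_{w₁,h,w₂} = {(x,y) ∈ ℤ² : (x < -w₁-h or x ≥ w₂), y ≤ 0}, and W(A,B) = 4 Σ_{x∈A} Σ_{y∈B} |x-y|^{-p}. Then f(w₁,h,w₂) ≤ C₂(w₁^{4-p} + w₂^{4-p}) for a constant C₂ depending only on p, uniformly in h. -/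
/-!
A pair `(a, b)` of a half-strip point and a quarter-plane point is coded injectively by four
natural numbers `n`: the distances of the coordinates of `a` and `b` to the corners, where `a` is
measured from the edge of the strip facing the quarter plane, which is what makes the bound
independent of `h`. With this coding the `ℓ¹` distance is at least `w + |n|`, and
`|x| ≥ |x|₁ / 2`, so the sum is dominated by `4 · 2^p · ∑_{n ∈ ℕ⁴} (w + |n|)^(-p)`. Summing out one
coordinate at a time, `∑_k (m + k)^(-s) ≤ 2 m^(1-s)` (telescoping against `m^(1-s)`) costs a
factor `2` and one power of `w` each, for a total of `64 · 2^p · w^(4-p)`.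
-/

open scoped ENNReal

lemma tsum_prod_le_add_of_subset_union {α β : Type*} {A : Set α} {B B₁ B₂ : Set β}
    (hB : B ⊆ B₁ ∪ B₂) (F : α → β → ℝ≥0∞) :
    ∑' q : A × B, F q.1 q.2 ≤ ∑' q : A × B₁, F q.1 q.2 + ∑' q : A × B₂, F q.1 q.2 := by
  simp only [ENNReal.tsum_prod', ← ENNReal.tsum_add]
  exact ENNReal.tsum_le_tsum fun a =>
    (ENNReal.tsum_mono_subtype (F a) hB).trans (ENNReal.tsum_union_le (F a) B₁ B₂)

lemma tsum_le_of_tsum_ofReal_le {ι : Type*} {f : ι → ℝ} (hf : ∀ i, 0 ≤ f i) {c : ℝ}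
    (hc : 0 ≤ c) (h : ∑' i, ENNReal.ofReal (f i) ≤ ENNReal.ofReal c) : ∑' i, f i ≤ c := by
  by_cases hs : Summable f
  · rwa [← ENNReal.ofReal_tsum_of_nonneg hf hs, ENNReal.ofReal_le_ofReal_iff hc] at h
  · rwa [tsum_eq_zero_of_not_summable hs]

lemma sub_one_mul_rpow_neg_le_sub_rpow {s x : ℝ} (hs : 2 ≤ s) (hx : 0 < x) :
    (s - 1) * (x + 1) ^ (-s) ≤ x ^ (1 - s) - (x + 1) ^ (1 - s) := by
  have hy : 0 < x + 1 := by linarith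
  have bernoulli : 1 + (s - 1) * x⁻¹ ≤ (1 + x⁻¹) ^ (s - 1) :=
    one_add_mul_self_le_rpow_one_add (by linarith [inv_pos.2 hx]) (by linarith)
  have hscale : (1 + x⁻¹) ^ (s - 1) * (x + 1) ^ (1 - s) = x ^ (1 - s) := by
    rw [show 1 + x⁻¹ = (x + 1) * x⁻¹ by field_simp, Real.mul_rpow hy.le (inv_nonneg.2 hx.le),
      Real.inv_rpow hx.le, mul_right_comm, ← Real.rpow_add hy, ← Real.rpow_neg hx.le]
    ring_nf
    simp
  calc (s - 1) * (x + 1) ^ (-s) = (s - 1) * (x + 1)⁻¹ * (x + 1) ^ (1 - s) := by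
        rw [show -s = 1 - s - 1 by ring, Real.rpow_sub_one hy.ne']
        ring
    _ ≤ (s - 1) * x⁻¹ * (x + 1) ^ (1 - s) := by gcongr <;> linarith
    _ ≤ ((1 + x⁻¹) ^ (s - 1) - 1) * (x + 1) ^ (1 - s) := by
        gcongr
        linarith
    _ = x ^ (1 - s) - (x + 1) ^ (1 - s) := by rw [sub_mul, hscale, one_mul]

lemma sum_range_add_succ_rpow_neg_le {s m : ℝ} (hs : 2 ≤ s) (hm : 0 < m) (n : ℕ) :
    ∑ k ∈ Finset.range n, (m + (k + 1 : ℕ)) ^ (-s) ≤ m ^ (1 - s) := by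
  have hpos : ∀ k : ℕ, 0 < m + k := fun k => by positivity
  calc ∑ k ∈ Finset.range n, (m + (k + 1 : ℕ)) ^ (-s)
      ≤ ∑ k ∈ Finset.range n, ((m + k) ^ (1 - s) - (m + (k + 1 : ℕ)) ^ (1 - s)) := by
        refine Finset.sum_le_sum fun k _ => ?_
        have hstep := sub_one_mul_rpow_neg_le_sub_rpow hs (hpos k)
        rw [Nat.cast_succ, ← add_assoc]
        refine le_trans ?_ hstep
        exact le_mul_of_one_le_left (Real.rpow_nonneg (by linarith [hpos k]) _) (by linarith)
    _ = m ^ (1 - s) - (m + n) ^ (1 - s) := by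
        rw [Finset.sum_range_sub' (fun k : ℕ => (m + k) ^ (1 - s))]
        simp
    _ ≤ m ^ (1 - s) := sub_le_self _ (Real.rpow_nonneg (hpos n).le _)

def RpowSumBound {ι : Type*} (c : ι → ℝ) (C : ℝ≥0∞) (d s₀ : ℝ) : Prop :=
  ∀ m : ℝ, 1 ≤ m → ∀ s : ℝ, s₀ ≤ s →
    ∑' i, ENNReal.ofReal ((m + c i) ^ (-s)) ≤ C * ENNReal.ofReal (m ^ (-(s - d)))

lemma rpowSumBound_natCast : RpowSumBound (fun k : ℕ => (k : ℝ)) 2 1 2 := by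
  intro m hm s hs
  have hhead : ENNReal.ofReal (m ^ (-s)) ≤ ENNReal.ofReal (m ^ (-(s - 1))) :=
    ENNReal.ofReal_le_ofReal (Real.rpow_le_rpow_of_exponent_le hm (by linarith))
  have htail : ∑' k : ℕ, ENNReal.ofReal ((m + (k + 1 : ℕ)) ^ (-s))
      ≤ ENNReal.ofReal (m ^ (-(s - 1))) := by
    refine ENNReal.tsum_le_of_sum_range_le fun n => ?_
    rw [← ENNReal.ofReal_sum_of_nonneg fun k _ => Real.rpow_nonneg (by positivity) _, neg_sub]
    exact ENNReal.ofReal_le_ofReal (sum_range_add_succ_rpow_neg_le hs (by linarith) n)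
  calc ∑' k : ℕ, ENNReal.ofReal ((m + k) ^ (-s))
      = ENNReal.ofReal (m ^ (-s)) + ∑' k : ℕ, ENNReal.ofReal ((m + (k + 1 : ℕ)) ^ (-s)) := by
        rw [tsum_eq_zero_add' ENNReal.summable, Nat.cast_zero, add_zero]
    _ ≤ 2 * ENNReal.ofReal (m ^ (-(s - 1))) := by
        rw [two_mul]
        gcongr

lemma RpowSumBound.prod {ι : Type*} {c : ι → ℝ} {C : ℝ≥0∞} {d s₀ : ℝ}
    (hb : RpowSumBound c C d s₀) (hc : ∀ i, 0 ≤ c i) (hd : 0 ≤ d) :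
    RpowSumBound (fun i : ι × ι => c i.1 + c i.2) (C * C) (2 * d) (s₀ + d) := by
  intro m hm s hs
  calc ∑' i : ι × ι, ENNReal.ofReal ((m + (c i.1 + c i.2)) ^ (-s))
      = ∑' i, ∑' j, ENNReal.ofReal ((m + c i + c j) ^ (-s)) := by
        rw [ENNReal.tsum_prod']
        simp only [add_assoc]
    _ ≤ ∑' i, C * ENNReal.ofReal ((m + c i) ^ (-(s - d))) :=
        ENNReal.tsum_le_tsum fun i => hb _ (by linarith [hc i]) _ (by linarith)
    _ ≤ C * (C * ENNReal.ofReal (m ^ (-(s - d - d)))) := by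
        rw [ENNReal.tsum_mul_left]
        gcongr
        exact hb m hm _ (by linarith)
    _ = C * C * ENNReal.ofReal (m ^ (-(s - 2 * d))) := by
        rw [← mul_assoc]
        ring_nf

lemma four_div_zNorm_rpow_le {x : ℤ × ℤ} {r p : ℝ} (hr : 0 < r)
    (hx : r ≤ |(x.1 : ℝ)| + |(x.2 : ℝ)|) (hp : 0 ≤ p) :
    4 / zNorm x ^ p ≤ 4 * 2 ^ p * r ^ (-p) := by
  have hz : r / 2 ≤ zNorm x := by
    rw [zNorm, Real.le_sqrt (by positivity) (by positivity)]
    nlinarith [sq_abs (x.1 : ℝ), sq_abs (x.2 : ℝ), abs_nonneg (x.1 : ℝ), abs_nonneg (x.2 : ℝ),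
      sq_nonneg (|(x.1 : ℝ)| - |(x.2 : ℝ)|)]
  calc 4 / zNorm x ^ p ≤ 4 / (r / 2) ^ p := by gcongr
    _ = 4 * 2 ^ p * r ^ (-p) := by
        rw [Real.div_rpow hr.le zero_le_two, Real.rpow_neg hr.le]
        field_simp

lemma tsum_four_div_zNorm_rpow_le_of_injOn {A B : Set (ℤ × ℤ)} {u v : ℤ × ℤ → ℕ × ℕ}
    (hu : A.InjOn u) (hv : B.InjOn v) {w : ℕ} (hw : 1 ≤ w)
    (hdist : ∀ a ∈ A, ∀ b ∈ B,
      (w : ℤ) + ((u a).1 + (u a).2 + ((v b).1 + (v b).2)) ≤ |a.1 - b.1| + |a.2 - b.2|)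
    {p : ℝ} (hp : 5 ≤ p) :
    ∑' q : A × B, ENNReal.ofReal (4 / zNorm ((q.1 : ℤ × ℤ) - q.2) ^ p)
      ≤ ENNReal.ofReal (64 * 2 ^ p * (w : ℝ) ^ (4 - p)) := by
  set g : (ℕ × ℕ) × (ℕ × ℕ) → ℝ≥0∞ := fun n => ENNReal.ofReal (4 * 2 ^ p) *
    ENNReal.ofReal (((w : ℝ) + ((n.1.1 + n.1.2 : ℝ) + (n.2.1 + n.2.2 : ℝ))) ^ (-p))
  have hcode : Function.Injective fun q : A × B => (u q.1, v q.2) := by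
    rintro ⟨a, b⟩ ⟨a', b'⟩ h
    obtain ⟨hua, hvb⟩ := Prod.mk.inj h
    exact Prod.ext (Subtype.ext (hu a.2 a'.2 hua)) (Subtype.ext (hv b.2 b'.2 hvb))
  have hpoint : ∀ q : A × B,
      ENNReal.ofReal (4 / zNorm ((q.1 : ℤ × ℤ) - q.2) ^ p) ≤ g (u q.1, v q.2) := by
    rintro ⟨⟨a, ha⟩, ⟨b, hb⟩⟩
    dsimp only [g]
    rw [← ENNReal.ofReal_mul (by positivity)]
    refine ENNReal.ofReal_le_ofReal (four_div_zNorm_rpow_le (by positivity) ?_ (by linarith))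
    have := hdist a ha b hb
    simp only [Prod.fst_sub, Prod.snd_sub]
    exact_mod_cast this
  have hlattice := (rpowSumBound_natCast.prod (fun k => k.cast_nonneg) zero_le_one).prod
    (fun k => by positivity) (by norm_num) (w : ℝ) (by exact_mod_cast hw) p (by linarith)
  calc ∑' q : A × B, ENNReal.ofReal (4 / zNorm ((q.1 : ℤ × ℤ) - q.2) ^ p)
      ≤ ∑' q : A × B, g (u q.1, v q.2) := ENNReal.tsum_le_tsum hpoint
    _ ≤ ∑' n, g n := ENNReal.tsum_comp_le_tsum_of_injective hcode g
    _ ≤ ENNReal.ofReal (4 * 2 ^ p) * (16 * ENNReal.ofReal ((w : ℝ) ^ (4 - p))) := by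
        rw [ENNReal.tsum_mul_left]
        refine mul_le_mul_right (hlattice.trans_eq ?_) _
        norm_num
    _ = ENNReal.ofReal (64 * 2 ^ p * (w : ℝ) ^ (4 - p)) := by
        rw [show (16 : ℝ≥0∞) = ENNReal.ofReal 16 by norm_num,
          ← ENNReal.ofReal_mul (by positivity), ← ENNReal.ofReal_mul (by positivity)]
        ring_nf

def halfStrip (h : ℕ) : Set (ℤ × ℤ) := {x | -(h : ℤ) ≤ x.1 ∧ x.1 < 0 ∧ 0 < x.2}

def leftQuarter (w h : ℕ) : Set (ℤ × ℤ) := {x | x.1 < -(w : ℤ) - h ∧ x.2 ≤ 0}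

def rightQuarter (w : ℕ) : Set (ℤ × ℤ) := {x | (w : ℤ) ≤ x.1 ∧ x.2 ≤ 0}

lemma tsum_halfStrip_leftQuarter_le {p : ℝ} (hp : 5 ≤ p) {w : ℕ} (hw : 1 ≤ w) (h : ℕ) :
    ∑' q : halfStrip h × leftQuarter w h,
        ENNReal.ofReal (4 / zNorm ((q.1 : ℤ × ℤ) - q.2) ^ p)
      ≤ ENNReal.ofReal (64 * 2 ^ p * (w : ℝ) ^ (4 - p)) := by
  refine tsum_four_div_zNorm_rpow_le_of_injOn (u := fun a => ((a.1 + h).toNat, (a.2 - 1).toNat))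
    (v := fun b => ((-b.1 - w - h - 1).toNat, (-b.2).toNat)) ?_ ?_ hw ?_ hp
  · rintro a ⟨ha₁, -, ha₂⟩ a' ⟨ha₁', -, ha₂'⟩ e
    simp only [Prod.mk.injEq] at e
    ext <;> omega
  · rintro b ⟨hb₁, hb₂⟩ b' ⟨hb₁', hb₂'⟩ e
    simp only [Prod.mk.injEq] at e
    ext <;> omega
  · rintro a ⟨ha₁, -, ha₂⟩ b ⟨hb₁, hb₂⟩
    rw [abs_of_nonneg (by omega), abs_of_nonneg (by omega)]
    omega

lemma tsum_halfStrip_rightQuarter_le {p : ℝ} (hp : 5 ≤ p) {w : ℕ} (hw : 1 ≤ w) (h : ℕ) :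
    ∑' q : halfStrip h × rightQuarter w,
        ENNReal.ofReal (4 / zNorm ((q.1 : ℤ × ℤ) - q.2) ^ p)
      ≤ ENNReal.ofReal (64 * 2 ^ p * (w : ℝ) ^ (4 - p)) := by
  refine tsum_four_div_zNorm_rpow_le_of_injOn (u := fun a => ((-a.1 - 1).toNat, (a.2 - 1).toNat))
    (v := fun b => ((b.1 - w).toNat, (-b.2).toNat)) ?_ ?_ hw ?_ hp
  · rintro a ⟨-, ha₁, ha₂⟩ a' ⟨-, ha₁', ha₂'⟩ e
    simp only [Prod.mk.injEq] at e
    ext <;> omega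
  · rintro b ⟨hb₁, hb₂⟩ b' ⟨hb₁', hb₂'⟩ e
    simp only [Prod.mk.injEq] at e
    ext <;> omega
  · rintro a ⟨-, ha₁, ha₂⟩ b ⟨hb₁, hb₂⟩
    rw [abs_of_nonpos (by omega), abs_of_nonneg (by omega)]
    omega

/-- for `p > 6`, the interaction
`f(w₁,h,w₂) = (1/2) W(L⁺_h, Q_{w₁,h,w₂})` between the half-strip
`L⁺_h = {(x,y) : -h ≤ x < 0, y > 0}` and the two quarter-spaces
`Q_{w₁,h,w₂} = {(x,y) : (x < -w₁-h or x ≥ w₂), y ≤ 0}`, where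
`W(A,B) = 4 Σ_{x∈A} Σ_{y∈B} |x-y|^{-p}`, satisfies
`f(w₁,h,w₂) ≤ C₂(w₁^{4-p} + w₂^{4-p})` for a constant `C₂` depending only on `p`,
uniformly in `h`. -/
theorem halfstrip_quarterplane_interaction_bound (p : ℝ) (hp : 6 < p) :
    ∃ C₂ : ℝ, 0 < C₂ ∧ ∀ w₁ w₂ h : ℕ, 1 ≤ w₁ → 1 ≤ w₂ → 1 ≤ h →
      (1 / 2) * ∑' q : ({x : ℤ × ℤ | -(h : ℤ) ≤ x.1 ∧ x.1 < 0 ∧ 0 < x.2} : Set (ℤ × ℤ)) ×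
          ({x : ℤ × ℤ | (x.1 < -(w₁ : ℤ) - (h : ℤ) ∨ (w₂ : ℤ) ≤ x.1) ∧ x.2 ≤ 0} : Set (ℤ × ℤ)),
          4 / zNorm ((q.1 : ℤ × ℤ) - (q.2 : ℤ × ℤ)) ^ p
        ≤ C₂ * ((w₁ : ℝ) ^ ((4 : ℝ) - p) + (w₂ : ℝ) ^ ((4 : ℝ) - p)) := by
  refine ⟨32 * 2 ^ p, by positivity, fun w₁ w₂ h hw₁ hw₂ _ => ?_⟩
  have hcover : {x : ℤ × ℤ | (x.1 < -(w₁ : ℤ) - (h : ℤ) ∨ (w₂ : ℤ) ≤ x.1) ∧ x.2 ≤ 0}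
      ⊆ leftQuarter w₁ h ∪ rightQuarter w₂ :=
    fun x hx => hx.1.imp (fun h₁ => ⟨h₁, hx.2⟩) (fun h₂ => ⟨h₂, hx.2⟩)
  have hsum := (tsum_prod_le_add_of_subset_union (A := halfStrip h) hcover
      fun a b => ENNReal.ofReal (4 / zNorm (a - b) ^ p)).trans
    (add_le_add (tsum_halfStrip_leftQuarter_le (by linarith) hw₁ h)
      (tsum_halfStrip_rightQuarter_le (by linarith) hw₂ h))
  rw [← ENNReal.ofReal_add (by positivity) (by positivity)] at hsum
  have hreal := tsum_le_of_tsum_ofReal_le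
    (fun q => div_nonneg zero_le_four (Real.rpow_nonneg (Real.sqrt_nonneg _) p))
    (by positivity) hsum
  exact (mul_le_mul_of_nonneg_left hreal one_half_pos.le).trans_eq (by ring)
end
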